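/- Convergence to a Dirac along the deterministic flow for empirical data: let u_0 = Σ_{k=1}^N w_k δ_{y_k} with w_k > 0 and distinct y_k ∈ ℝ^d, let s be the associated score function, and let X solve dX_t/dt = -s(X_t,t) on (0,T] with X_T = x_T. Suppose there exist t* ∈ (0,T) and an index i such that X_t ∈ V_i(γ) for all t ∈ (0,t*), where γ = (1/2) min_{j≠i} ‖y_i - y_j‖². Then there is a constant C > 0 (depending on x_T, T) with ‖X_t - y_i‖ ≤ C √t for all t ∈ (0,T]; in particular X_t → y_i as t → 0⁺. -/

import Mathlib

open Real Set Filter Topology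

/-- The Gaussian-weighted barycenter of the weighted points `(w_k, y_k)` at scale `t`. -/
noncomputable def meanShiftW {d N : ℕ} (w : Fin N → ℝ) (y : Fin N → EuclideanSpace ℝ (Fin d))
    (x : EuclideanSpace ℝ (Fin d)) (t : ℝ) : EuclideanSpace ℝ (Fin d) :=
  (∑ k : Fin N, w k * Real.exp (-‖x - y k‖ ^ 2 / (4 * t)))⁻¹ •
    ∑ k : Fin N, (w k * Real.exp (-‖x - y k‖ ^ 2 / (4 * t))) • y k

/-- The score function of the empirical heat flow, via the Gaussian mean-shift formula
`s(x,t) = (m(x,t) - x)/(2t)`. -/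
noncomputable def scoreW {d N : ℕ} (w : Fin N → ℝ) (y : Fin N → EuclideanSpace ℝ (Fin d))
    (x : EuclideanSpace ℝ (Fin d)) (t : ℝ) : EuclideanSpace ℝ (Fin d) :=
  (2 * t)⁻¹ • (meanShiftW w y x t - x)

/-- The `γ`-Voronoi core of `y i`. -/
def voronoiCore {d N : ℕ} (y : Fin N → EuclideanSpace ℝ (Fin d)) (i : Fin N) (γ : ℝ) :
    Set (EuclideanSpace ℝ (Fin d)) :=
  {x | ∀ j : Fin N, j ≠ i → ‖x - y j‖ ^ 2 - ‖x - y i‖ ^ 2 ≥ γ}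

lemma meanShift_sub_norm_le {d N : ℕ} (w : Fin N → ℝ) (hw : ∀ k, 0 < w k)
    (y : Fin N → EuclideanSpace ℝ (Fin d)) (i : Fin N)
    (x : EuclideanSpace ℝ (Fin d)) (t : ℝ) :
    ‖meanShiftW w y x t - y i‖ ≤
      (∑ k : Fin N, w k * Real.exp (-‖x - y k‖ ^ 2 / (4 * t)))⁻¹ *
        ∑ k : Fin N, (w k * Real.exp (-‖x - y k‖ ^ 2 / (4 * t))) * ‖y k - y i‖ := by
  set a : Fin N → ℝ := fun k => w k * Real.exp (-‖x - y k‖ ^ 2 / (4 * t)) with ha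
  have hak : ∀ k, 0 < a k := fun k => mul_pos (hw k) (Real.exp_pos _)
  have hS : 0 < ∑ k, a k :=
    Finset.sum_pos (fun k _ => hak k) ⟨i, Finset.mem_univ i⟩
  set S : ℝ := ∑ k, a k with hSdef
  have hrep : meanShiftW w y x t - y i = S⁻¹ • ∑ k, a k • (y k - y i) := by
    have h1 : ∑ k, a k • (y k - y i) = (∑ k, a k • y k) - S • y i := by
      rw [hSdef, Finset.sum_smul, ← Finset.sum_sub_distrib]
      simp [smul_sub]
    rw [h1, smul_sub, smul_smul, inv_mul_cancel₀ hS.ne', one_smul]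
    rfl
  rw [hrep, norm_smul, norm_inv, Real.norm_eq_abs, abs_of_pos hS]
  refine mul_le_mul_of_nonneg_left ?_ (by positivity)
  refine (norm_sum_le _ _).trans ?_
  refine Finset.sum_le_sum fun k _ => ?_
  rw [norm_smul, Real.norm_eq_abs, abs_of_pos (hak k)]

lemma meanShift_global_bound {d N : ℕ} (w : Fin N → ℝ) (hw : ∀ k, 0 < w k)
    (y : Fin N → EuclideanSpace ℝ (Fin d)) (i : Fin N)
    (x : EuclideanSpace ℝ (Fin d)) (t : ℝ) :
    ‖meanShiftW w y x t - y i‖ ≤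
      Finset.univ.sup' ⟨i, Finset.mem_univ i⟩ (fun k => ‖y k - y i‖) := by
  set D := Finset.univ.sup' ⟨i, Finset.mem_univ i⟩ (fun k => ‖y k - y i‖) with hD
  set a : Fin N → ℝ := fun k => w k * Real.exp (-‖x - y k‖ ^ 2 / (4 * t)) with ha
  have hak : ∀ k, 0 < a k := fun k => mul_pos (hw k) (Real.exp_pos _)
  have hS : 0 < ∑ k, a k := Finset.sum_pos (fun k _ => hak k) ⟨i, Finset.mem_univ i⟩
  refine (meanShift_sub_norm_le w hw y i x t).trans ?_
  have h1 : ∑ k, a k * ‖y k - y i‖ ≤ (∑ k, a k) * D := by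
    rw [Finset.sum_mul]
    refine Finset.sum_le_sum fun k _ => ?_
    have hle : ‖y k - y i‖ ≤ D := by
      rw [hD]; exact Finset.le_sup' (fun k => ‖y k - y i‖) (Finset.mem_univ k)
    exact mul_le_mul_of_nonneg_left hle (hak k).le
  calc (∑ k, a k)⁻¹ * ∑ k, a k * ‖y k - y i‖
      ≤ (∑ k, a k)⁻¹ * ((∑ k, a k) * D) := by
        exact mul_le_mul_of_nonneg_left h1 (by positivity)
    _ = D := by field_simp

lemma meanShift_voronoi_bound {d N : ℕ} (w : Fin N → ℝ) (hw : ∀ k, 0 < w k)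
    (y : Fin N → EuclideanSpace ℝ (Fin d)) (i : Fin N) (γ : ℝ)
    (x : EuclideanSpace ℝ (Fin d)) (t : ℝ) (ht : 0 < t)
    (hx : x ∈ voronoiCore y i γ) :
    ‖meanShiftW w y x t - y i‖ ≤
      ((∑ k : Fin N, w k) / w i) *
        (Finset.univ.sup' ⟨i, Finset.mem_univ i⟩ (fun k => ‖y k - y i‖)) *
          Real.exp (-γ / (4 * t)) := by
  set D := Finset.univ.sup' ⟨i, Finset.mem_univ i⟩ (fun k => ‖y k - y i‖) with hD
  have hD0 : 0 ≤ D := by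
    rw [hD]
    exact le_trans (norm_nonneg (y i - y i)) (Finset.le_sup' (fun k => ‖y k - y i‖) (Finset.mem_univ i))
  set a : Fin N → ℝ := fun k => w k * Real.exp (-‖x - y k‖ ^ 2 / (4 * t)) with ha
  have hak : ∀ k, 0 < a k := fun k => mul_pos (hw k) (Real.exp_pos _)
  have hS : 0 < ∑ k, a k := Finset.sum_pos (fun k _ => hak k) ⟨i, Finset.mem_univ i⟩
  set E : ℝ := Real.exp (-γ / (4 * t)) with hE
  have hE0 : 0 < E := Real.exp_pos _
  refine (meanShift_sub_norm_le w hw y i x t).trans ?_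
  have key : ∀ k, a k * ‖y k - y i‖ ≤ (w k / w i) * a i * E * D := by
    intro k
    by_cases hk : k = i
    · rw [hk]
      simp only [sub_self, norm_zero, mul_zero]
      exact mul_nonneg (mul_nonneg (mul_nonneg (div_nonneg (hw i).le (hw i).le) (hak i).le)
        hE0.le) hD0
    · have hvor := hx k hk
      have h1 : -‖x - y k‖ ^ 2 / (4 * t) ≤ -‖x - y i‖ ^ 2 / (4 * t) + -γ / (4 * t) := by
        rw [← add_div, div_le_div_iff₀ (by positivity) (by positivity)]
        nlinarith [hvor]
      have h2 : a k ≤ w k * (Real.exp (-‖x - y i‖ ^ 2 / (4 * t)) * E) := by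
        rw [ha]
        refine mul_le_mul_of_nonneg_left ?_ (hw k).le
        rw [hE, ← Real.exp_add]
        exact Real.exp_le_exp.2 h1
      have hDk : ‖y k - y i‖ ≤ D := by
        rw [hD]; exact Finset.le_sup' (fun k => ‖y k - y i‖) (Finset.mem_univ k)
      calc a k * ‖y k - y i‖ ≤ (w k * (Real.exp (-‖x - y i‖ ^ 2 / (4 * t)) * E)) * D := by
            exact mul_le_mul h2 hDk (norm_nonneg _)
              (mul_nonneg (hw k).le (mul_nonneg (Real.exp_pos _).le hE0.le))
        _ = (w k / w i) * a i * E * D := by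
            rw [ha]
            field_simp [(hw i).ne']
  have hsum : ∑ k, a k * ‖y k - y i‖ ≤ ((∑ k, w k) / w i) * a i * E * D := by
    have : ((∑ k, w k) / w i) * a i * E * D = ∑ k, (w k / w i) * a i * E * D := by
      rw [Finset.sum_div, Finset.sum_mul, Finset.sum_mul, Finset.sum_mul]
    rw [this]
    exact Finset.sum_le_sum fun k _ => key k
  have hinv : (∑ k, a k)⁻¹ ≤ (a i)⁻¹ := by
    apply inv_anti₀ (hak i)
    exact Finset.single_le_sum (fun k _ => (hak k).le) (Finset.mem_univ i)
  calc (∑ k, a k)⁻¹ * ∑ k, a k * ‖y k - y i‖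
      ≤ (a i)⁻¹ * (((∑ k, w k) / w i) * a i * E * D) := by
        refine mul_le_mul hinv hsum (Finset.sum_nonneg fun k _ => ?_) (inv_nonneg.2 (hak i).le)
        exact mul_nonneg (hak k).le (norm_nonneg _)
    _ = ((∑ k, w k) / w i) * D * E * ((a i)⁻¹ * a i) := by ring
    _ = ((∑ k, w k) / w i) * D * E := by
        rw [inv_mul_cancel₀ (hak i).ne', mul_one]

lemma le_of_deriv_nonneg_Ioc {f f' : ℝ → ℝ} {a T : ℝ} (ha : 0 < a) (haT : a < T)
    (hd : ∀ t ∈ Set.Ioo (0:ℝ) T, HasDerivAt f (f' t) t)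
    (h0 : ∀ t ∈ Set.Ioo (0:ℝ) a, 0 ≤ f' t) :
    ∀ t ∈ Set.Ioc (0:ℝ) a, f t ≤ f a := by
  have hsub : Set.Ioc (0:ℝ) a ⊆ Set.Ioo (0:ℝ) T := fun x hx => ⟨hx.1, lt_of_le_of_lt hx.2 haT⟩
  have hmono := monotoneOn_of_deriv_nonneg (convex_Ioc (0:ℝ) a)
    (fun x hx => (hd x (hsub hx)).continuousAt.continuousWithinAt)
    (fun x hx => by
      rw [interior_Ioc] at hx
      exact (hd x (hsub (Set.Ioo_subset_Ioc_self hx))).differentiableAt.differentiableWithinAt)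
    (fun x hx => by
      rw [interior_Ioc] at hx
      rw [(hd x (hsub (Set.Ioo_subset_Ioc_self hx))).deriv]
      exact h0 x hx)
  exact fun t ht => hmono ht ⟨ha, le_refl a⟩ ht.2

lemma le_of_deriv_nonpos_Icc {f f' : ℝ → ℝ} {a b T : ℝ} (ha : 0 < a) (hab : a ≤ b) (hbT : b < T)
    (hd : ∀ t ∈ Set.Ioo (0:ℝ) T, HasDerivAt f (f' t) t)
    (h0 : ∀ t ∈ Set.Ioo a b, f' t ≤ 0) :
    f b ≤ f a := by
  rcases eq_or_lt_of_le hab with rfl | hab'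
  · exact le_refl _
  · have hsub : Set.Icc a b ⊆ Set.Ioo (0:ℝ) T := fun x hx =>
      ⟨lt_of_lt_of_le ha hx.1, lt_of_le_of_lt hx.2 hbT⟩
    have hanti := antitoneOn_of_deriv_nonpos (convex_Icc a b)
      (fun x hx => (hd x (hsub hx)).continuousAt.continuousWithinAt)
      (fun x hx => by
        rw [interior_Icc] at hx
        exact (hd x (hsub (Set.Ioo_subset_Icc_self hx))).differentiableAt.differentiableWithinAt)
      (fun x hx => by
        rw [interior_Icc] at hx
        rw [(hd x (hsub (Set.Ioo_subset_Icc_self hx))).deriv]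
        exact h0 x hx)
    exact hanti ⟨le_refl a, hab⟩ ⟨hab, le_refl b⟩ hab

set_option maxHeartbeats 1600000 in
/-- Convergence to a Dirac along the deterministic generation flow for empirical data. -/
theorem convergence_to_dirac_empirical (d N : ℕ) (hN : 1 < N) (T : ℝ) (hT : 0 < T)
    (w : Fin N → ℝ) (hw : ∀ k, 0 < w k)
    (y : Fin N → EuclideanSpace ℝ (Fin d)) (hy : Function.Injective y)
    (X : ℝ → EuclideanSpace ℝ (Fin d)) (xT : EuclideanSpace ℝ (Fin d))
    (hODE : ∀ t ∈ Set.Ioo (0 : ℝ) T, HasDerivAt X (-scoreW w y (X t) t) t)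
    (hXT : X T = xT)
    (i : Fin N) (tstar : ℝ) (htstar : tstar ∈ Set.Ioo (0 : ℝ) T)
    (hVoronoi : ∀ t ∈ Set.Ioo (0 : ℝ) tstar,
      X t ∈ voronoiCore y i
        ((1 / 2) * (Finset.univ.erase i).inf'
          (by
            have : Nontrivial (Fin N) := Fin.nontrivial_iff_two_le.2 hN
            obtain ⟨j, hj⟩ := exists_ne i
            exact ⟨j, Finset.mem_erase.2 ⟨hj, Finset.mem_univ j⟩⟩)
          (fun j => ‖y i - y j‖ ^ 2))) :
    (∃ C : ℝ, 0 < C ∧ ∀ t ∈ Set.Ioc (0 : ℝ) T, ‖X t - y i‖ ≤ C * Real.sqrt t) ∧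
    Tendsto X (𝓝[>] (0 : ℝ)) (𝓝 (y i)) := by
  obtain ⟨hts0, htsT⟩ := htstar
  have hne : ((Finset.univ : Finset (Fin N)).erase i).Nonempty := by
    have : Nontrivial (Fin N) := Fin.nontrivial_iff_two_le.2 hN
    obtain ⟨j, hj⟩ := exists_ne i
    exact ⟨j, Finset.mem_erase.2 ⟨hj, Finset.mem_univ j⟩⟩
  set gam : ℝ := (1 / 2) * ((Finset.univ.erase i).inf' hne fun j => ‖y i - y j‖ ^ 2)
    with hgamdef
  have hVor : ∀ t ∈ Set.Ioo (0 : ℝ) tstar, X t ∈ voronoiCore y i gam := hVoronoi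
  have hgam : 0 < gam := by
    rw [hgamdef]
    have h : 0 < (Finset.univ.erase i).inf' hne fun j => ‖y i - y j‖ ^ 2 := by
      rw [Finset.lt_inf'_iff]
      intro j hj
      have hji : j ≠ i := (Finset.mem_erase.1 hj).1
      have hne2 : y i - y j ≠ 0 := sub_ne_zero.2 fun h => hji (hy h).symm
      exact pow_pos (norm_pos_iff.2 hne2) 2
    linarith
  set D : ℝ := Finset.univ.sup' ⟨i, Finset.mem_univ i⟩ (fun k => ‖y k - y i‖) with hDdef
  have hD0 : 0 ≤ D := by
    rw [hDdef]
    exact le_trans (norm_nonneg (y i - y i))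
      (Finset.le_sup' (fun k => ‖y k - y i‖) (Finset.mem_univ i))
  set B : ℝ := ((∑ k, w k) / w i) * D with hBdef
  have hB0 : 0 ≤ B := by
    rw [hBdef]
    exact mul_nonneg (div_nonneg (Finset.sum_nonneg fun k _ => (hw k).le) (hw i).le) hD0
  -- the squared distance and the inner-product term
  set r : ℝ → ℝ := fun t => ‖X t - y i‖ ^ 2 with hrdef
  set ip : ℝ → ℝ := fun t =>
    (inner ℝ (X t - meanShiftW w y (X t) t) (X t - y i) : ℝ) with hipdef
  have hr0 : ∀ t, 0 ≤ r t := fun t => by rw [hrdef]; positivity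
  have hrρ : ∀ t, r t = ‖X t - y i‖ ^ 2 := fun t => rfl
  -- derivative of r along the flow
  have hrderiv : ∀ t ∈ Set.Ioo (0 : ℝ) T, HasDerivAt r (t⁻¹ * ip t) t := by
    intro t ht
    have hX := hODE t ht
    have h1 : HasDerivAt (fun u => X u - y i) (-scoreW w y (X t) t) t := hX.sub_const _
    have h2 := h1.inner ℝ h1
    have h3 : HasDerivAt r ((inner ℝ (X t - y i) (-scoreW w y (X t) t) : ℝ) +
        (inner ℝ (-scoreW w y (X t) t) (X t - y i) : ℝ)) t := by
      have heq : r = fun u => (inner ℝ (X u - y i) (X u - y i) : ℝ) := by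
        funext u
        simp only [hrdef]
        exact (real_inner_self_eq_norm_sq _).symm
      rw [heq]
      exact h2
    have hsc : -scoreW w y (X t) t = (2 * t)⁻¹ • (X t - meanShiftW w y (X t) t) := by
      simp only [scoreW]
      rw [← smul_neg, neg_sub]
    convert h3 using 1
    rw [hsc, real_inner_smul_right, real_inner_smul_left, real_inner_comm (X t - y i)]
    simp only [hipdef]
    ring_nf
    rw [real_inner_comm (X t - y i)]
  -- lower bound for ip on the Voronoi region
  have hipeq : ∀ t, ip t = r t - (inner ℝ (meanShiftW w y (X t) t - y i) (X t - y i) : ℝ) := by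
    intro t
    simp only [hipdef, hrdef]
    have hsplit : X t - meanShiftW w y (X t) t =
        (X t - y i) - (meanShiftW w y (X t) t - y i) := by abel
    rw [hsplit, inner_sub_left, real_inner_self_eq_norm_sq]
  have habs : ∀ t, |(inner ℝ (meanShiftW w y (X t) t - y i) (X t - y i) : ℝ)| ≤
      ‖meanShiftW w y (X t) t - y i‖ * ‖X t - y i‖ := fun t => abs_real_inner_le_norm _ _
  have hiplow : ∀ t ∈ Set.Ioo (0 : ℝ) tstar,
      r t - (B * Real.exp (-gam / (4 * t))) * ‖X t - y i‖ ≤ ip t := by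
    intro t ht
    have hb := meanShift_voronoi_bound w hw y i gam (X t) t ht.1 (hVor t ht)
    have h2 : ‖meanShiftW w y (X t) t - y i‖ * ‖X t - y i‖ ≤
        (B * Real.exp (-gam / (4 * t))) * ‖X t - y i‖ := by
      apply mul_le_mul_of_nonneg_right _ (norm_nonneg _)
      rw [hBdef, hDdef]
      exact hb
    have h3 := le_abs_self ((inner ℝ (meanShiftW w y (X t) t - y i) (X t - y i) : ℝ))
    rw [hipeq t]
    linarith [habs t]
  -- upper bound for ip everywhere
  have hipup : ∀ t ∈ Set.Ioo (0 : ℝ) T, ip t ≤ r t + D * ‖X t - y i‖ := by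
    intro t ht
    have hb := meanShift_global_bound w hw y i (X t) t
    have h2 : ‖meanShiftW w y (X t) t - y i‖ * ‖X t - y i‖ ≤ D * ‖X t - y i‖ := by
      apply mul_le_mul_of_nonneg_right _ (norm_nonneg _)
      rw [hDdef]
      exact hb
    have h3 := neg_abs_le ((inner ℝ (meanShiftW w y (X t) t - y i) (X t - y i) : ℝ))
    rw [hipeq t]
    linarith [habs t]
  -- Step A: a priori bound via the function r(t)/sqrt(t)
  have hψ₁d : ∀ u ∈ Set.Ioo (0:ℝ) T,
      HasDerivAt (fun u => r u * (Real.sqrt u)⁻¹ +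
          (B ^ 2 * Real.sqrt tstar / gam) * Real.exp (-gam / 2 * u⁻¹))
        ((u⁻¹ * ip u) * (Real.sqrt u)⁻¹ + r u * (-(1 / (2 * Real.sqrt u)) / Real.sqrt u ^ 2)
          + (B ^ 2 * Real.sqrt tstar / gam) *
            (Real.exp (-gam / 2 * u⁻¹) * (-gam / 2 * -(u ^ 2)⁻¹))) u := by
    intro u hu
    have h1 := (hrderiv u hu).mul ((Real.hasDerivAt_sqrt hu.1.ne').inv
      ((Real.sqrt_pos.2 hu.1).ne'))
    have h2 := (((hasDerivAt_inv hu.1.ne').const_mul (-gam / 2)).exp).const_mul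
      (B ^ 2 * Real.sqrt tstar / gam)
    exact h1.add h2
  have hψ₁n : ∀ u ∈ Set.Ioo (0:ℝ) tstar,
      0 ≤ (u⁻¹ * ip u) * (Real.sqrt u)⁻¹ + r u * (-(1 / (2 * Real.sqrt u)) / Real.sqrt u ^ 2)
          + (B ^ 2 * Real.sqrt tstar / gam) *
            (Real.exp (-gam / 2 * u⁻¹) * (-gam / 2 * -(u ^ 2)⁻¹)) := by
    intro u hu
    have hu0 : 0 < u := hu.1
    have hst : 0 < Real.sqrt u := Real.sqrt_pos.2 hu0
    have hst2 : Real.sqrt u ^ 2 = u := Real.sq_sqrt hu0.le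
    have hstt : Real.sqrt u ≤ Real.sqrt tstar := Real.sqrt_le_sqrt hu.2.le
    have hlow := hiplow u hu
    have hconv : Real.exp (-gam / (4 * u)) = Real.exp (-gam / 4 * u⁻¹) := by congr 1; ring
    rw [hconv] at hlow
    set st := Real.sqrt u with hstdef
    set stt := Real.sqrt tstar with hsttdef
    set e4 := Real.exp (-gam / 4 * u⁻¹) with he4def
    set e2 := Real.exp (-gam / 2 * u⁻¹) with he2def
    set ρ := ‖X u - y i‖ with hρdef
    set R := r u with hRdef
    set P := ip u with hPdef
    have he4pos : 0 < e4 := by rw [he4def]; exact Real.exp_pos _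
    have he2pos : 0 < e2 := by rw [he2def]; exact Real.exp_pos _
    have hρ0 : 0 ≤ ρ := by rw [hρdef]; exact norm_nonneg _
    have hR0 : 0 ≤ R := by rw [hRdef]; exact hr0 u
    have he2sq : e2 = e4 ^ 2 := by
      rw [he2def, he4def, sq, ← Real.exp_add]
      ring_nf
    have hru : R = ρ ^ 2 := by rw [hRdef, hρdef]
    have key1 : 2 * (B * e4) * ρ ≤ R + B ^ 2 * e2 := by
      rw [he2sq, hru]
      nlinarith [sq_nonneg (ρ - B * e4)]
    have heq : (u⁻¹ * P) * st⁻¹ + R * (-(1 / (2 * st)) / st ^ 2)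
          + (B ^ 2 * stt / gam) * (e2 * (-gam / 2 * -(u ^ 2)⁻¹))
        = (2 * u * P - u * R + B ^ 2 * stt * e2 * st) / (2 * u ^ 2 * st) := by
      rw [← hst2]
      field_simp
      ring
    rw [heq]
    apply div_nonneg _ (by positivity)
    have p1 : st * (R - B * e4 * ρ) ≤ st * P :=
      mul_le_mul_of_nonneg_left hlow hst.le
    have p2 : st * (2 * (B * e4) * ρ) ≤ st * (R + B ^ 2 * e2) :=
      mul_le_mul_of_nonneg_left key1 hst.le
    have p3 : B ^ 2 * e2 * st ≤ B ^ 2 * e2 * stt :=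
      mul_le_mul_of_nonneg_left hstt (mul_nonneg (sq_nonneg B) he2pos.le)
    have hlevel : 0 ≤ 2 * st * P - st * R + B ^ 2 * stt * e2 := by nlinarith [p1, p2, p3]
    have hfac : 2 * u * P - u * R + B ^ 2 * stt * e2 * st
        = st * (2 * st * P - st * R + B ^ 2 * stt * e2) := by rw [← hst2]; ring
    rw [hfac]
    exact mul_nonneg hst.le hlevel
  have hA := le_of_deriv_nonneg_Ioc hts0 htsT hψ₁d hψ₁n
  set M2 : ℝ := Real.sqrt tstar * (r tstar * (Real.sqrt tstar)⁻¹ +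
      (B ^ 2 * Real.sqrt tstar / gam) * Real.exp (-gam / 2 * tstar⁻¹)) with hM2def
  have hρM : ∀ u ∈ Set.Ioc (0:ℝ) tstar, ‖X u - y i‖ ≤ Real.sqrt M2 := by
    intro u hu
    have h := hA u hu
    have hst : 0 < Real.sqrt u := Real.sqrt_pos.2 hu.1
    have hnn : 0 ≤ (B ^ 2 * Real.sqrt tstar / gam) * Real.exp (-gam / 2 * u⁻¹) := by positivity
    have h2 : r u * (Real.sqrt u)⁻¹ ≤ r tstar * (Real.sqrt tstar)⁻¹ +
        (B ^ 2 * Real.sqrt tstar / gam) * Real.exp (-gam / 2 * tstar⁻¹) := by linarith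
    have hlhs0 : 0 ≤ r u * (Real.sqrt u)⁻¹ :=
      mul_nonneg (hr0 u) (inv_nonneg.2 (Real.sqrt_nonneg u))
    have hΨ0 : 0 ≤ r tstar * (Real.sqrt tstar)⁻¹ +
        (B ^ 2 * Real.sqrt tstar / gam) * Real.exp (-gam / 2 * tstar⁻¹) := le_trans hlhs0 h2
    have hru : r u ≤ M2 := by
      have e1 : r u = (r u * (Real.sqrt u)⁻¹) * Real.sqrt u := by
        field_simp
      calc r u = (r u * (Real.sqrt u)⁻¹) * Real.sqrt u := e1
        _ ≤ (r tstar * (Real.sqrt tstar)⁻¹ +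
            (B ^ 2 * Real.sqrt tstar / gam) * Real.exp (-gam / 2 * tstar⁻¹)) * Real.sqrt u :=
          mul_le_mul_of_nonneg_right h2 hst.le
        _ ≤ (r tstar * (Real.sqrt tstar)⁻¹ +
            (B ^ 2 * Real.sqrt tstar / gam) * Real.exp (-gam / 2 * tstar⁻¹)) * Real.sqrt tstar :=
          mul_le_mul_of_nonneg_left (Real.sqrt_le_sqrt hu.2) hΨ0
        _ = M2 := by rw [hM2def]; ring
    have : ‖X u - y i‖ = Real.sqrt (r u) := by
      rw [hrρ]; exact (Real.sqrt_sq (norm_nonneg _)).symm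
    rw [this]
    exact Real.sqrt_le_sqrt hru
  -- Step B: the sharp rate via r(t)/t
  have hψ₂d : ∀ u ∈ Set.Ioo (0:ℝ) T,
      HasDerivAt (fun u => r u * u⁻¹ +
          (4 * B * Real.sqrt M2 / gam) * Real.exp (-gam / 4 * u⁻¹))
        ((u⁻¹ * ip u) * u⁻¹ + r u * -(u ^ 2)⁻¹
          + (4 * B * Real.sqrt M2 / gam) *
            (Real.exp (-gam / 4 * u⁻¹) * (-gam / 4 * -(u ^ 2)⁻¹))) u := by
    intro u hu
    exact ((hrderiv u hu).mul (hasDerivAt_inv hu.1.ne')).add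
      ((((hasDerivAt_inv hu.1.ne').const_mul (-gam / 4)).exp).const_mul _)
  have hψ₂n : ∀ u ∈ Set.Ioo (0:ℝ) tstar,
      0 ≤ (u⁻¹ * ip u) * u⁻¹ + r u * -(u ^ 2)⁻¹
          + (4 * B * Real.sqrt M2 / gam) *
            (Real.exp (-gam / 4 * u⁻¹) * (-gam / 4 * -(u ^ 2)⁻¹)) := by
    intro u hu
    have hu0 : 0 < u := hu.1
    have he4 : (0:ℝ) < Real.exp (-gam / 4 * u⁻¹) := Real.exp_pos _
    have hM0 : 0 ≤ Real.sqrt M2 := Real.sqrt_nonneg _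
    have hlow := hiplow u hu
    have hconv : Real.exp (-gam / (4 * u)) = Real.exp (-gam / 4 * u⁻¹) := by congr 1; ring
    rw [hconv] at hlow
    have hρM' := hρM u ⟨hu.1, hu.2.le⟩
    have heq : (u⁻¹ * ip u) * u⁻¹ + r u * -(u ^ 2)⁻¹
          + (4 * B * Real.sqrt M2 / gam) *
            (Real.exp (-gam / 4 * u⁻¹) * (-gam / 4 * -(u ^ 2)⁻¹))
        = (ip u - r u + B * Real.exp (-gam / 4 * u⁻¹) * Real.sqrt M2) / u ^ 2 := by
      field_simp
      ring
    rw [heq]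
    apply div_nonneg _ (by positivity)
    have hmm : B * Real.exp (-gam / 4 * u⁻¹) * ‖X u - y i‖ ≤
        B * Real.exp (-gam / 4 * u⁻¹) * Real.sqrt M2 :=
      mul_le_mul_of_nonneg_left hρM' (mul_nonneg hB0 he4.le)
    nlinarith [hlow, hmm]
  have hB' := le_of_deriv_nonneg_Ioc hts0 htsT hψ₂d hψ₂n
  set K2 : ℝ := r tstar * tstar⁻¹ +
      (4 * B * Real.sqrt M2 / gam) * Real.exp (-gam / 4 * tstar⁻¹) with hK2def
  have hK2 : 0 ≤ K2 := by
    rw [hK2def]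
    have := hr0 tstar
    positivity
  have hρB : ∀ u ∈ Set.Ioc (0:ℝ) tstar,
      ‖X u - y i‖ ≤ Real.sqrt K2 * Real.sqrt u := by
    intro u hu
    have h := hB' u hu
    have hnn : 0 ≤ (4 * B * Real.sqrt M2 / gam) * Real.exp (-gam / 4 * u⁻¹) := by positivity
    have h2 : r u * u⁻¹ ≤ K2 := by rw [hK2def]; linarith
    have hru : r u ≤ K2 * u := by
      have e1 : r u = (r u * u⁻¹) * u := by field_simp [hu.1.ne']
      calc r u = (r u * u⁻¹) * u := e1
        _ ≤ K2 * u := mul_le_mul_of_nonneg_right h2 hu.1.le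
    have e2 : ‖X u - y i‖ = Real.sqrt (r u) := by
      rw [hrρ]; exact (Real.sqrt_sq (norm_nonneg _)).symm
    rw [e2, ← Real.sqrt_mul hK2]
    exact Real.sqrt_le_sqrt hru
  -- Step C: bound on [tstar, T)
  set c3 : ℝ := 3 / (2 * tstar) with hc3def
  have hc3 : 0 < c3 := by rw [hc3def]; positivity
  have hψ₃d : ∀ u ∈ Set.Ioo (0:ℝ) T,
      HasDerivAt (fun u => (r u + D ^ 2 / 3) * Real.exp (-c3 * u))
        ((u⁻¹ * ip u) * Real.exp (-c3 * u)
          + (r u + D ^ 2 / 3) * (Real.exp (-c3 * u) * (-c3 * 1))) u := by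
    intro u hu
    exact ((hrderiv u hu).add_const _).mul (((hasDerivAt_id u).const_mul (-c3)).exp)
  have hψ₃n : ∀ u ∈ Set.Ioo tstar T,
      (u⁻¹ * ip u) * Real.exp (-c3 * u)
        + (r u + D ^ 2 / 3) * (Real.exp (-c3 * u) * (-c3 * 1)) ≤ 0 := by
    intro u hu
    have hu0 : 0 < u := hts0.trans hu.1
    have hup := hipup u ⟨hu0, hu.2⟩
    have h1 : ip u ≤ 3 / 2 * r u + D ^ 2 / 2 := by
      nlinarith [hup, sq_nonneg (‖X u - y i‖ - D), hrρ u]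
    have h2 : u⁻¹ * ip u ≤ u⁻¹ * (3 / 2 * r u + D ^ 2 / 2) :=
      mul_le_mul_of_nonneg_left h1 (inv_nonneg.2 hu0.le)
    have h3 : u⁻¹ * (3 / 2 * r u + D ^ 2 / 2) ≤ tstar⁻¹ * (3 / 2 * r u + D ^ 2 / 2) := by
      apply mul_le_mul_of_nonneg_right (inv_anti₀ hts0 hu.1.le)
      have := hr0 u
      positivity
    have h4 : tstar⁻¹ * (3 / 2 * r u + D ^ 2 / 2) = c3 * (r u + D ^ 2 / 3) := by
      rw [hc3def]; field_simp
    have key : u⁻¹ * ip u ≤ c3 * (r u + D ^ 2 / 3) := by linarith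
    have heq : (u⁻¹ * ip u) * Real.exp (-c3 * u)
        + (r u + D ^ 2 / 3) * (Real.exp (-c3 * u) * (-c3 * 1))
        = Real.exp (-c3 * u) * (u⁻¹ * ip u - c3 * (r u + D ^ 2 / 3)) := by ring
    rw [heq]
    exact mul_nonpos_iff.2 (Or.inl ⟨(Real.exp_pos _).le, by linarith⟩)
  set M3 : ℝ := (r tstar + D ^ 2 / 3) * Real.exp (c3 * T) with hM3def
  have hM3base : 0 ≤ r tstar + D ^ 2 / 3 := by
    have := hr0 tstar; positivity
  have hCbd : ∀ u, tstar ≤ u → u < T → r u ≤ M3 := by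
    intro u h1 h2
    have h := le_of_deriv_nonpos_Icc hts0 h1 h2 hψ₃d
      (fun x hx => hψ₃n x ⟨hx.1, hx.2.trans h2⟩)
    have hEu : 0 < Real.exp (-c3 * u) := Real.exp_pos _
    have h5 : r u + D ^ 2 / 3 ≤ (r tstar + D ^ 2 / 3) *
        (Real.exp (-c3 * tstar) / Real.exp (-c3 * u)) := by
      rw [← mul_div_assoc]
      exact (le_div_iff₀ hEu).2 h
    have h6 : Real.exp (-c3 * tstar) / Real.exp (-c3 * u) = Real.exp (c3 * u - c3 * tstar) := by
      rw [← Real.exp_sub]; congr 1; ring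
    have h7 : Real.exp (c3 * u - c3 * tstar) ≤ Real.exp (c3 * T) := by
      apply Real.exp_le_exp.2
      nlinarith [mul_pos hc3 (show (0:ℝ) < T - u + tstar by linarith)]
    have h8 : (r tstar + D ^ 2 / 3) * Real.exp (c3 * u - c3 * tstar) ≤
        (r tstar + D ^ 2 / 3) * Real.exp (c3 * T) :=
      mul_le_mul_of_nonneg_left h7 hM3base
    rw [h6] at h5
    have hd3 : (0:ℝ) ≤ D ^ 2 / 3 := by positivity
    rw [hM3def]
    linarith
  -- Assemble the constant
  set C : ℝ := Real.sqrt K2 + Real.sqrt M3 / Real.sqrt tstar + ‖xT - y i‖ / Real.sqrt T + 1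
    with hCdef
  have hsK2 : 0 ≤ Real.sqrt K2 := Real.sqrt_nonneg _
  have hsM3 : 0 ≤ Real.sqrt M3 / Real.sqrt tstar :=
    div_nonneg (Real.sqrt_nonneg _) (Real.sqrt_nonneg _)
  have hsxT : 0 ≤ ‖xT - y i‖ / Real.sqrt T :=
    div_nonneg (norm_nonneg _) (Real.sqrt_nonneg _)
  have hC : 0 < C := by rw [hCdef]; linarith
  have hbound : ∀ t ∈ Set.Ioc (0:ℝ) T, ‖X t - y i‖ ≤ C * Real.sqrt t := by
    intro t ht
    obtain ⟨ht0, htT⟩ := ht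
    have hsqt : 0 ≤ Real.sqrt t := Real.sqrt_nonneg t
    rcases le_or_gt t tstar with hcase | hcase
    · have hb := hρB t ⟨ht0, hcase⟩
      have hcle : Real.sqrt K2 ≤ C := by rw [hCdef]; linarith
      calc ‖X t - y i‖ ≤ Real.sqrt K2 * Real.sqrt t := hb
        _ ≤ C * Real.sqrt t := mul_le_mul_of_nonneg_right hcle hsqt
    · rcases eq_or_lt_of_le htT with heq | hlt
      · subst heq
        rw [hXT]
        have hTs : (0:ℝ) < Real.sqrt t := Real.sqrt_pos.2 hT
        have e1 : ‖xT - y i‖ = (‖xT - y i‖ / Real.sqrt t) * Real.sqrt t := by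
          field_simp
        rw [e1]
        apply mul_le_mul_of_nonneg_right _ hsqt
        rw [hCdef]; linarith
      · have hb := hCbd t hcase.le hlt
        have hρ3 : ‖X t - y i‖ ≤ Real.sqrt M3 := by
          have e2 : ‖X t - y i‖ = Real.sqrt (r t) := by
            rw [hrρ]; exact (Real.sqrt_sq (norm_nonneg _)).symm
          rw [e2]
          exact Real.sqrt_le_sqrt hb
        have hstep : Real.sqrt M3 ≤ (Real.sqrt M3 / Real.sqrt tstar) * Real.sqrt t := by
          rw [div_mul_eq_mul_div, le_div_iff₀ (Real.sqrt_pos.2 hts0)]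
          exact mul_le_mul_of_nonneg_left (Real.sqrt_le_sqrt hcase.le) (Real.sqrt_nonneg M3)
        have hcle : Real.sqrt M3 / Real.sqrt tstar ≤ C := by rw [hCdef]; linarith
        calc ‖X t - y i‖ ≤ Real.sqrt M3 := hρ3
          _ ≤ (Real.sqrt M3 / Real.sqrt tstar) * Real.sqrt t := hstep
          _ ≤ C * Real.sqrt t := mul_le_mul_of_nonneg_right hcle hsqt
  refine ⟨⟨C, hC, hbound⟩, ?_⟩
  have hev : ∀ᶠ t in 𝓝[>] (0:ℝ), dist (X t) (y i) ≤ C * Real.sqrt t := by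
    filter_upwards [Ioc_mem_nhdsGT_of_mem (Set.mem_Ico.2 ⟨le_refl (0:ℝ), hT⟩)] with t ht
    rw [dist_eq_norm]
    exact hbound t ht
  have h0 : Tendsto (fun t : ℝ => C * Real.sqrt t) (𝓝[>] (0:ℝ)) (𝓝 0) := by
    have h1 : Tendsto (fun t : ℝ => C * Real.sqrt t) (𝓝 (0:ℝ)) (𝓝 (C * Real.sqrt 0)) :=
      (Real.continuous_sqrt.tendsto 0).const_mul C
    have h2 : Tendsto (fun t : ℝ => C * Real.sqrt t) (𝓝[>] (0:ℝ)) (𝓝 (C * Real.sqrt 0)) :=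
      h1.mono_left nhdsWithin_le_nhds
    simpa using h2
  exact tendsto_iff_dist_tendsto_zero.2
    (squeeze_zero' (Filter.Eventually.of_forall fun t => dist_nonneg) hev h0)
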